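/- Let L be a split regular Hom-Leibniz algebra with symmetric root system Λ. For a fixed α ∈ Λ, let [α] be its connection-equivalence class, I_{0,[α]} = span{[L_β, L_{-β}] : β ∈ [α]} ⊆ H, V_{[α]} = ⊕_{β∈[α]} L_β, and I_{[α]} = I_{0,[α]} ⊕ V_{[α]}. Then I_{[α]} is a subalgebra of L: [I_{[α]}, I_{[α]}] ⊆ I_{[α]} and φ(I_{[α]}) = I_{[α]}. -/
import Mathlib


open Submodule

/-- A split regular Hom-Leibniz algebra: a vector space `L` over `K` with a bilinear
product, an algebra automorphism `φ` satisfying the Hom-Leibniz identity, together with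
a distinguished abelian subalgebra `H` (with `φ|_H` given as `φH`). -/
structure SplitRegularHomLeibniz (K L : Type*) [Field K] [AddCommGroup L] [Module K L] where
  bracket : L →ₗ[K] L →ₗ[K] L
  φ : L ≃ₗ[K] L
  leibniz : ∀ x y z : L, bracket (bracket y z) (φ x)
      = bracket (bracket y x) (φ z) + bracket (φ y) (bracket z x)
  φ_bracket : ∀ x y : L, φ (bracket x y) = bracket (φ x) (φ y)
  H : Submodule K L
  H_abelian : ∀ x ∈ H, ∀ y ∈ H, bracket x y = 0
  φH : H ≃ₗ[K] H
  φH_spec : ∀ h : H, (φH h : L) = φ h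

namespace SplitRegularHomLeibniz

variable {K L : Type*} [Field K] [AddCommGroup L] [Module K L]
variable (A : SplitRegularHomLeibniz K L)

/-- The root space associated to a linear functional `α : H → K`. -/
def rootSpace (α : Module.Dual K A.H) : Submodule K L where
  carrier := {v | ∀ h : A.H, A.bracket v h = α h • A.φ v}
  add_mem' := by
    intro a b ha hb h
    simp [map_add, ha h, hb h, smul_add]
  zero_mem' := by intro h; simp
  smul_mem' := by
    intro c a ha h
    simp only [map_smul, LinearMap.smul_apply, ha h]
    rw [smul_comm]

/-- The set of nonzero roots. -/
def roots : Set (Module.Dual K A.H) := {α | α ≠ 0 ∧ A.rootSpace α ≠ ⊥}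

/-- The splitting condition : `L = H ⊕ (⊕_{α ∈ Λ} L_α)`. -/
def IsSplit : Prop :=
  (A.H ⊔ ⨆ α ∈ A.roots, A.rootSpace α) = ⊤ ∧
  iSupIndep
    (fun i : Option A.roots => Option.elim i A.H (fun α => A.rootSpace α.1))

/-- `H` is a maximal abelian subalgebra. -/
def MaximalAbelian : Prop := ∀ H' : Submodule K L,
  (∀ x ∈ H', ∀ y ∈ H', A.bracket x y = 0) → H'.map A.φ.toLinearMap = H' →
    A.H ≤ H' → H' = A.H

/-- The map `α ↦ α ∘ φ⁻¹` on linear functionals on `H`. -/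
def twist (α : Module.Dual K A.H) : Module.Dual K A.H :=
  α.comp A.φH.symm.toLinearMap

/-- The map `α ↦ α ∘ φ^{-z}` for `z : ℤ`. -/
def ztwist (z : ℤ) (α : Module.Dual K A.H) : Module.Dual K A.H :=
  α.comp ((A.φH ^ (-z)).toLinearMap)

/-- Twisted partial sums of a chain of roots:
`s 0 = f 0`, `s (i+1) = (s i)∘φ⁻¹ + (f (i+1))∘φ⁻¹`. -/
def chainSums (f : ℕ → Module.Dual K A.H) : ℕ → Module.Dual K A.H
  | 0 => f 0
  | i + 1 => A.twist (chainSums f i + f (i + 1))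

/-- `α` is connected to `β`. -/
def Connected (α β : Module.Dual K A.H) : Prop :=
  ∃ (k : ℕ) (f : ℕ → Module.Dual K A.H),
    (∀ i ≤ k, f i ∈ A.roots) ∧
    (∃ n : ℕ, f 0 = A.twist^[n] α) ∧
    (∀ i < k, A.chainSums f i ∈ A.roots) ∧
    (∃ m : ℕ, A.chainSums f k = A.twist^[m] β ∨ A.chainSums f k = -(A.twist^[m] β))

/-- Symmetric root system. -/
def SymmetricRoots : Prop := ∀ α ∈ A.roots, -α ∈ A.roots

/-- `[L_α, L_{-α}]` as a submodule (its span). -/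
def bracketSpan (α : Module.Dual K A.H) : Submodule K L :=
  Submodule.span K
    (Set.image2 (fun x y => A.bracket x y) (A.rootSpace α : Set L) (A.rootSpace (-α) : Set L))

/-- The connection class of `α`. -/
def cls (α : Module.Dual K A.H) : Set (Module.Dual K A.H) :=
  {β | β ∈ A.roots ∧ A.Connected α β}

def I0 (α : Module.Dual K A.H) : Submodule K L := ⨆ β ∈ A.cls α, A.bracketSpan β

def Vcls (α : Module.Dual K A.H) : Submodule K L := ⨆ β ∈ A.cls α, A.rootSpace β

/-- The ideal associated to the connection class of `α`. -/
def Icls (α : Module.Dual K A.H) : Submodule K L := A.I0 α ⊔ A.Vcls α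

/-- Ideals of a Hom-Leibniz algebra. -/
def IsIdeal (I : Submodule K L) : Prop :=
  (∀ x ∈ I, ∀ y : L, A.bracket x y ∈ I ∧ A.bracket y x ∈ I) ∧
    I.map A.φ.toLinearMap = I

/-- The ideal `J` generated by the squares `[x,x]`. -/
def J : Submodule K L :=
  sInf {I : Submodule K L | A.IsIdeal I ∧ ∀ x : L, A.bracket x x ∈ I}

/-- The annihilator `Z(L)`. -/
def annihilator : Set L :=
  {x | ∀ y : L, A.bracket x y = 0 ∧ A.bracket y x = 0}


/-- The candidate ideal attached to a set of roots. -/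
def IOfClass (S : Set (Module.Dual K A.H)) : Submodule K L :=
  (⨆ β ∈ S, A.bracketSpan β) ⊔ (⨆ β ∈ S, A.rootSpace β)

/-- Maximal length: every root space is one-dimensional. -/
def MaximalLength : Prop := ∀ α ∈ A.roots, Module.finrank K (A.rootSpace α) = 1

/-- `L = [L,L]`. -/
def BracketGenerates : Prop :=
  Submodule.span K {z : L | ∃ x y : L, z = A.bracket x y} = ⊤

/-- The roots `α` with `L_α ⊆ J`. -/
def rootsJ : Set (Module.Dual K A.H) := {α ∈ A.roots | A.rootSpace α ≤ A.J}

/-- The roots `α` with `L_α ∩ J = 0`. -/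
def rootsNotJ : Set (Module.Dual K A.H) := {α ∈ A.roots | A.rootSpace α ⊓ A.J = ⊥}

/-- Root-multiplicativity for split regular Hom-Leibniz algebras of maximal length. -/
def RootMultiplicative : Prop :=
  (∀ α ∈ A.rootsNotJ, ∀ β ∈ A.rootsNotJ, A.twist α + A.twist β ∈ A.roots →
    ∃ x ∈ A.rootSpace α, ∃ y ∈ A.rootSpace β, A.bracket x y ≠ 0) ∧
  (∀ α ∈ A.rootsNotJ, ∀ γ ∈ A.rootsJ, A.twist α + A.twist γ ∈ A.rootsJ →
    ∃ x ∈ A.rootSpace α, ∃ y ∈ A.rootSpace γ, A.bracket x y ≠ 0)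

/-- `α` is `¬J`-connected to `β` (both in `Λ^γ`, given by the set `S`):
there is a chain whose elements beyond the first lie in `Λ^{¬J}` and whose twisted
partial sums lie in `Λ^γ`. -/
def NotJConnected (S : Set (Module.Dual K A.H)) (α β : Module.Dual K A.H) : Prop :=
  ∃ (k : ℕ) (f : ℕ → Module.Dual K A.H),
    (∀ i, 1 ≤ i → i ≤ k → f i ∈ A.rootsNotJ) ∧
    (∃ n : ℕ, f 0 = A.twist^[n] α) ∧
    (∀ i ≤ k, A.chainSums f i ∈ S) ∧
    (∃ m : ℕ, A.chainSums f k = A.twist^[m] β ∨ A.chainSums f k = -(A.twist^[m] β))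

/-- Triviality of the Lie-annihilator `Z_Lie(L)`. -/
def LieAnnZero : Prop := ∀ x : L,
  (∀ y ∈ A.H ⊔ ⨆ α ∈ A.rootsNotJ, A.rootSpace α,
    A.bracket x y = 0 ∧ A.bracket y x = 0) → x = 0

end SplitRegularHomLeibniz

namespace SplitRegularHomLeibniz

variable {K L : Type*} [Field K] [AddCommGroup L] [Module K L]
variable (A : SplitRegularHomLeibniz K L)

lemma mem_rootSpace {γ : Module.Dual K A.H} {v : L} :
    v ∈ A.rootSpace γ ↔ ∀ h : A.H, A.bracket v h = γ h • A.φ v := Iff.rfl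

lemma twist_apply (γ : Module.Dual K A.H) (h : A.H) :
    A.twist γ h = γ (A.φH.symm h) := rfl

lemma twist_zero : A.twist (0 : Module.Dual K A.H) = 0 := by
  ext h; simp [twist]

lemma twist_add (a b : Module.Dual K A.H) : A.twist (a + b) = A.twist a + A.twist b := by
  ext h; simp [twist]

lemma twist_neg (a : Module.Dual K A.H) : A.twist (-a) = -(A.twist a) := by
  ext h; simp [twist]

lemma twist_comp (γ : Module.Dual K A.H) :
    A.twist (γ.comp A.φH.toLinearMap) = γ := by
  ext h; simp [twist]

lemma comp_twist (γ : Module.Dual K A.H) :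
    (A.twist γ).comp A.φH.toLinearMap = γ := by
  ext h; simp [twist]

lemma twist_eq_zero {γ : Module.Dual K A.H} (h : A.twist γ = 0) : γ = 0 := by
  rw [← A.comp_twist γ, h]; ext x; simp

lemma coe_eq_phi (h : A.H) : (h : L) = A.φ ↑(A.φH.symm h) := by
  rw [← A.φH_spec]; simp

lemma bracket_mem_rootSpace {ρ τ : Module.Dual K A.H} {x y : L}
    (hx : x ∈ A.rootSpace ρ) (hy : y ∈ A.rootSpace τ) :
    A.bracket x y ∈ A.rootSpace (A.twist (ρ + τ)) := by
  intro h'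
  have hx' := A.mem_rootSpace.1 hx (A.φH.symm h')
  have hy' := A.mem_rootSpace.1 hy (A.φH.symm h')
  rw [A.coe_eq_phi h', A.leibniz, hx', hy']
  simp only [map_smul, LinearMap.map_smul₂, LinearMap.smul_apply, ← A.φ_bracket,
    A.twist_apply, LinearMap.add_apply, add_smul]

lemma phi_mem_rootSpace {γ : Module.Dual K A.H} {v : L} (hv : v ∈ A.rootSpace γ) :
    A.φ v ∈ A.rootSpace (A.twist γ) := by
  intro h
  rw [A.coe_eq_phi h, ← A.φ_bracket, A.mem_rootSpace.1 hv (A.φH.symm h), map_smul,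
    A.twist_apply]

lemma phiSymm_mem_rootSpace {γ : Module.Dual K A.H} {v : L} (hv : v ∈ A.rootSpace γ) :
    A.φ.symm v ∈ A.rootSpace (γ.comp A.φH.toLinearMap) := by
  intro h
  apply A.φ.injective
  rw [A.φ_bracket, map_smul, A.φ.apply_symm_apply, ← A.φH_spec,
    A.mem_rootSpace.1 hv (A.φH h)]
  rfl

lemma twist_mem_roots {γ : Module.Dual K A.H} (h : γ ∈ A.roots) : A.twist γ ∈ A.roots := by
  obtain ⟨h1, h2⟩ := h
  refine ⟨fun hc => h1 (A.twist_eq_zero hc), ?_⟩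
  obtain ⟨v, hv, hv0⟩ := (Submodule.ne_bot_iff _).1 h2
  exact (Submodule.ne_bot_iff _).2 ⟨A.φ v, A.phi_mem_rootSpace hv,
    fun hc => hv0 (A.φ.map_eq_zero_iff.1 hc)⟩

lemma comp_mem_roots {γ : Module.Dual K A.H} (h : γ ∈ A.roots) :
    γ.comp A.φH.toLinearMap ∈ A.roots := by
  obtain ⟨h1, h2⟩ := h
  refine ⟨fun hc => h1 (by rw [← A.twist_comp γ, hc, A.twist_zero]), ?_⟩
  obtain ⟨v, hv, hv0⟩ := (Submodule.ne_bot_iff _).1 h2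
  exact (Submodule.ne_bot_iff _).2 ⟨A.φ.symm v, A.phiSymm_mem_rootSpace hv,
    fun hc => hv0 (by simpa using congrArg A.φ hc)⟩

lemma iterate_twist_mem_roots {γ : Module.Dual K A.H} (h : γ ∈ A.roots) (m : ℕ) :
    A.twist^[m] γ ∈ A.roots := by
  induction m with
  | zero => exact h
  | succ m ih => rw [Function.iterate_succ_apply']; exact A.twist_mem_roots ih

lemma iterate_twist_add (m : ℕ) (a b : Module.Dual K A.H) :
    A.twist^[m] (a + b) = A.twist^[m] a + A.twist^[m] b := by
  induction m with
  | zero => rfl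
  | succ m ih => simp only [Function.iterate_succ_apply', ih, twist_add]

lemma iterate_twist_neg (m : ℕ) (a : Module.Dual K A.H) :
    A.twist^[m] (-a) = -(A.twist^[m] a) := by
  induction m with
  | zero => rfl
  | succ m ih => simp only [Function.iterate_succ_apply', ih, twist_neg]

lemma twist_iterate_swap (m : ℕ) (γ : Module.Dual K A.H) :
    A.twist (A.twist^[m] γ) = A.twist^[m] (A.twist γ) :=
  (Function.iterate_succ_apply' A.twist m γ).symm.trans (Function.iterate_succ_apply A.twist m γ)

lemma chainSums_zero (f : ℕ → Module.Dual K A.H) : A.chainSums f 0 = f 0 := rfl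

lemma chainSums_succ (f : ℕ → Module.Dual K A.H) (i : ℕ) :
    A.chainSums f (i + 1) = A.twist (A.chainSums f i + f (i + 1)) := rfl

lemma chainSums_congr {f g : ℕ → Module.Dual K A.H} (i : ℕ) (h : ∀ j ≤ i, f j = g j) :
    A.chainSums f i = A.chainSums g i := by
  induction i with
  | zero => exact h 0 le_rfl
  | succ i ih =>
    rw [chainSums_succ, chainSums_succ,
      ih (fun j hj => h j (hj.trans (Nat.le_succ i))), h (i+1) le_rfl]

lemma chainSums_twist_comp (f : ℕ → Module.Dual K A.H) (i : ℕ) :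
    A.chainSums (fun j => A.twist (f j)) i = A.twist (A.chainSums f i) := by
  induction i with
  | zero => rfl
  | succ i ih => rw [chainSums_succ, chainSums_succ, ih, ← twist_add]

lemma mem_cls_iff {β : Module.Dual K A.H} {α : Module.Dual K A.H} :
    β ∈ A.cls α ↔ β ∈ A.roots ∧ A.Connected α β := Iff.rfl

lemma self_mem_cls {α : Module.Dual K A.H} (hα : α ∈ A.roots) : α ∈ A.cls α :=
  ⟨hα, 0, fun _ => α, fun _ _ => hα, ⟨0, rfl⟩,
    fun i hi => absurd hi (Nat.not_lt_zero i), 0, Or.inl rfl⟩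

lemma twist_mem_cls {α β : Module.Dual K A.H} (hβ : β ∈ A.cls α) :
    A.twist β ∈ A.cls α := by
  obtain ⟨hβr, k, f, hf, ⟨n, h0⟩, hs, m, hend⟩ := hβ
  refine ⟨A.twist_mem_roots hβr, k, fun j => A.twist (f j),
    fun i hi => A.twist_mem_roots (hf i hi), ⟨n + 1, ?_⟩,
    fun i hi => by rw [A.chainSums_twist_comp]; exact A.twist_mem_roots (hs i hi), m, ?_⟩
  · show A.twist (f 0) = A.twist^[n+1] α
    rw [h0]
    exact (Function.iterate_succ_apply' A.twist n α).symm
  · rw [A.chainSums_twist_comp]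
    rcases hend with h | h
    · left; rw [h, A.twist_iterate_swap]
    · right; rw [h, twist_neg, A.twist_iterate_swap]

lemma comp_mem_cls {α β : Module.Dual K A.H} (hβ : β ∈ A.cls α) :
    β.comp A.φH.toLinearMap ∈ A.cls α := by
  obtain ⟨hβr, k, f, hf, h0, hs, m, hend⟩ := hβ
  have ht : A.twist^[m+1] (β.comp A.φH.toLinearMap) = A.twist^[m] β := by
    rw [Function.iterate_succ_apply, A.twist_comp]
  refine ⟨A.comp_mem_roots hβr, k, f, hf, h0, hs, m + 1, ?_⟩
  rcases hend with h | h
  · left; rw [h, ht]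
  · right; rw [h, ht]

lemma sum_mem_cls (hsym : A.SymmetricRoots) {α β δ : Module.Dual K A.H}
    (hβ : β ∈ A.cls α) (hδ : δ ∈ A.roots) (hr : A.twist (β + δ) ∈ A.roots) :
    A.twist (β + δ) ∈ A.cls α := by
  obtain ⟨hβr, k, f, hf, ⟨n, h0⟩, hs, m, hend⟩ := hβ
  refine ⟨hr, ?_⟩
  rcases hend with hend | hend
  · set g : ℕ → Module.Dual K A.H := fun i => if i ≤ k then f i else A.twist^[m] δ with hg
    have hgf : ∀ i ≤ k, A.chainSums g i = A.chainSums f i := fun i hi =>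
      A.chainSums_congr i (fun j hj => by simp [hg, if_pos (hj.trans hi)])
    refine ⟨k + 1, g, ?_, ⟨n, by simp [hg, h0]⟩, ?_, m, Or.inl ?_⟩
    · intro i hi
      rcases Nat.lt_or_ge i (k+1) with h | h
      · have : i ≤ k := Nat.lt_succ_iff.1 h
        simpa [hg, if_pos this] using hf i this
      · have : ¬ i ≤ k := by omega
        simpa [hg, if_neg this] using A.iterate_twist_mem_roots hδ m
    · intro i hi
      have hik : i ≤ k := Nat.lt_succ_iff.1 hi
      rw [hgf i hik]
      rcases Nat.lt_or_ge i k with h | h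
      · exact hs i h
      · have : i = k := le_antisymm hik h
        subst this
        rw [hend]; exact A.iterate_twist_mem_roots hβr m
    · rw [chainSums_succ, hgf k le_rfl, hend]
      have : g (k+1) = A.twist^[m] δ := by simp [hg]
      rw [this, ← A.iterate_twist_add, A.twist_iterate_swap]
  · set g : ℕ → Module.Dual K A.H := fun i => if i ≤ k then f i else -(A.twist^[m] δ) with hg
    have hgf : ∀ i ≤ k, A.chainSums g i = A.chainSums f i := fun i hi =>
      A.chainSums_congr i (fun j hj => by simp [hg, if_pos (hj.trans hi)])
    refine ⟨k + 1, g, ?_, ⟨n, by simp [hg, h0]⟩, ?_, m, Or.inr ?_⟩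
    · intro i hi
      rcases Nat.lt_or_ge i (k+1) with h | h
      · have : i ≤ k := Nat.lt_succ_iff.1 h
        simpa [hg, if_pos this] using hf i this
      · have : ¬ i ≤ k := by omega
        simpa [hg, if_neg this] using hsym _ (A.iterate_twist_mem_roots hδ m)
    · intro i hi
      have hik : i ≤ k := Nat.lt_succ_iff.1 hi
      rw [hgf i hik]
      rcases Nat.lt_or_ge i k with h | h
      · exact hs i h
      · have : i = k := le_antisymm hik h
        subst this
        rw [hend]; exact hsym _ (A.iterate_twist_mem_roots hβr m)
    · rw [chainSums_succ, hgf k le_rfl, hend]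
      have : g (k+1) = -(A.twist^[m] δ) := by simp [hg]
      rw [this, ← neg_add, twist_neg, ← A.iterate_twist_add, A.twist_iterate_swap]

end SplitRegularHomLeibniz

namespace SplitRegularHomLeibniz

variable {K L : Type*} [Field K] [AddCommGroup L] [Module K L]
variable (A : SplitRegularHomLeibniz K L)

lemma bracketSpan_le_rootSpace_zero (β : Module.Dual K A.H) :
    A.bracketSpan β ≤ A.rootSpace 0 := by
  rw [bracketSpan, Submodule.span_le]
  rintro z ⟨u, hu, v, hv, rfl⟩
  have := A.bracket_mem_rootSpace hu hv
  rwa [add_neg_cancel, twist_zero] at this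

lemma bracketSpan_le_I0 {α β : Module.Dual K A.H} (hβ : β ∈ A.cls α) :
    A.bracketSpan β ≤ A.I0 α :=
  le_iSup₂_of_le β hβ le_rfl

lemma rootSpace_le_Vcls {α β : Module.Dual K A.H} (hβ : β ∈ A.cls α) :
    A.rootSpace β ≤ A.Vcls α :=
  le_iSup₂_of_le β hβ le_rfl

lemma I0_le_rootSpace_zero (α : Module.Dual K A.H) : A.I0 α ≤ A.rootSpace 0 := by
  unfold I0
  exact iSup₂_le fun β _ => A.bracketSpan_le_rootSpace_zero β

lemma I0_le_Icls (α : Module.Dual K A.H) : A.I0 α ≤ A.Icls α := le_sup_left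

lemma Vcls_le_Icls (α : Module.Dual K A.H) : A.Vcls α ≤ A.Icls α := le_sup_right

lemma bracket_I0_rootSpaceZero {α : Module.Dual K A.H} {t s : L}
    (ht : t ∈ A.I0 α) (hs : s ∈ A.rootSpace 0) : A.bracket t s ∈ A.I0 α := by
  have hx'' : A.φ.symm s ∈ A.rootSpace 0 := by
    have := A.phiSymm_mem_rootSpace hs; rwa [LinearMap.zero_comp] at this
  have key : A.I0 α ≤ Submodule.comap (A.bracket.flip s) (A.I0 α) := by
    unfold I0
    refine iSup₂_le fun β hβ => ?_
    rw [bracketSpan, Submodule.span_le]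
    rintro z ⟨u, hu, v, hv, rfl⟩
    simp only [SetLike.mem_coe, Submodule.mem_comap, LinearMap.flip_apply]
    have hls : s = A.φ (A.φ.symm s) := (A.φ.apply_symm_apply s).symm
    rw [hls, A.leibniz]
    have h1 : A.bracket (A.bracket u (A.φ.symm s)) (A.φ v) ∈ A.bracketSpan (A.twist β) := by
      apply Submodule.subset_span
      refine Set.mem_image2_of_mem ?_ ?_
      · have := A.bracket_mem_rootSpace hu hx''; rwa [add_zero] at this
      · have := A.phi_mem_rootSpace hv; rwa [twist_neg] at this
    have h2 : A.bracket (A.φ u) (A.bracket v (A.φ.symm s)) ∈ A.bracketSpan (A.twist β) := by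
      apply Submodule.subset_span
      refine Set.mem_image2_of_mem (A.phi_mem_rootSpace hu) ?_
      have := A.bracket_mem_rootSpace hv hx''; rwa [add_zero, twist_neg] at this
    exact add_mem (A.bracketSpan_le_I0 (A.twist_mem_cls hβ) h1)
      (A.bracketSpan_le_I0 (A.twist_mem_cls hβ) h2)
  simpa using key ht

lemma bracket_rootSpaceZero_Vcls {α : Module.Dual K A.H} {t y : L}
    (ht : t ∈ A.rootSpace 0) (hy : y ∈ A.Vcls α) : A.bracket t y ∈ A.Vcls α := by
  have key : A.Vcls α ≤ Submodule.comap (A.bracket t) (A.Vcls α) := by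
    unfold Vcls
    refine iSup₂_le fun δ hδ => fun z hz => ?_
    simp only [SetLike.mem_coe, Submodule.mem_comap]
    have := A.bracket_mem_rootSpace ht hz
    rw [zero_add] at this
    exact A.rootSpace_le_Vcls (A.twist_mem_cls hδ) this
  exact key hy

lemma bracket_Vcls_rootSpaceZero {α : Module.Dual K A.H} {x s : L}
    (hx : x ∈ A.Vcls α) (hs : s ∈ A.rootSpace 0) : A.bracket x s ∈ A.Vcls α := by
  have key : A.Vcls α ≤ Submodule.comap (A.bracket.flip s) (A.Vcls α) := by
    unfold Vcls
    refine iSup₂_le fun δ hδ => fun z hz => ?_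
    simp only [SetLike.mem_coe, Submodule.mem_comap, LinearMap.flip_apply]
    have := A.bracket_mem_rootSpace hz hs
    rw [add_zero] at this
    exact A.rootSpace_le_Vcls (A.twist_mem_cls hδ) this
  simpa using key hx

lemma bracket_rootSpace_Vcls (hsym : A.SymmetricRoots) {α β : Module.Dual K A.H}
    (hβ : β ∈ A.cls α) {x y : L} (hx : x ∈ A.rootSpace β) (hy : y ∈ A.Vcls α) :
    A.bracket x y ∈ A.Icls α := by
  have key : A.Vcls α ≤ Submodule.comap (A.bracket x) (A.Icls α) := by
    unfold Vcls
    refine iSup₂_le fun δ hδ => fun z hz => ?_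
    simp only [SetLike.mem_coe, Submodule.mem_comap]
    by_cases h0 : β + δ = 0
    · have hδβ : δ = -β := eq_neg_of_add_eq_zero_right h0
      rw [hδβ] at hz
      exact A.I0_le_Icls α (A.bracketSpan_le_I0 hβ
        (Submodule.subset_span (Set.mem_image2_of_mem hx hz)))
    · have hb := A.bracket_mem_rootSpace hx hz
      by_cases hr : A.twist (β + δ) ∈ A.roots
      · exact A.Vcls_le_Icls α (A.rootSpace_le_Vcls (A.sum_mem_cls hsym hβ hδ.1 hr) hb)
      · have hzero : A.rootSpace (A.twist (β + δ)) = ⊥ := by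
          by_contra hbb
          exact hr ⟨fun hc => h0 (A.twist_eq_zero hc), hbb⟩
        rw [hzero, Submodule.mem_bot] at hb
        rw [hb]
        exact zero_mem _
  exact key hy

lemma map_rootSpace (γ : Module.Dual K A.H) :
    (A.rootSpace γ).map A.φ.toLinearMap = A.rootSpace (A.twist γ) := by
  apply le_antisymm
  · rintro z ⟨w, hw, rfl⟩
    exact A.phi_mem_rootSpace hw
  · intro w hw
    refine ⟨A.φ.symm w, ?_, by simp⟩
    have := A.phiSymm_mem_rootSpace hw
    rwa [A.comp_twist] at this

lemma map_bracketSpan (β : Module.Dual K A.H) :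
    (A.bracketSpan β).map A.φ.toLinearMap = A.bracketSpan (A.twist β) := by
  apply le_antisymm
  · rw [bracketSpan, Submodule.map_span, Submodule.span_le]
    rintro z ⟨w, ⟨u, hu, v, hv, rfl⟩, rfl⟩
    apply Submodule.subset_span
    simp only [LinearEquiv.coe_coe]
    rw [A.φ_bracket]
    refine Set.mem_image2_of_mem (A.phi_mem_rootSpace hu) ?_
    have := A.phi_mem_rootSpace hv
    rwa [twist_neg] at this
  · rw [show A.bracketSpan (A.twist β)
      = Submodule.span K (Set.image2 (fun x y => A.bracket x y)
        (A.rootSpace (A.twist β) : Set L) (A.rootSpace (-(A.twist β)) : Set L)) from rfl,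
      Submodule.span_le]
    rintro z ⟨u, hu, v, hv, rfl⟩
    have hu' : A.φ.symm u ∈ A.rootSpace β := by
      have := A.phiSymm_mem_rootSpace hu; rwa [A.comp_twist] at this
    have hv' : A.φ.symm v ∈ A.rootSpace (-β) := by
      have := A.phiSymm_mem_rootSpace hv
      rwa [LinearMap.neg_comp, A.comp_twist] at this
    refine Submodule.mem_map.2 ⟨A.bracket (A.φ.symm u) (A.φ.symm v),
      Submodule.subset_span (Set.mem_image2_of_mem hu' hv'), ?_⟩
    simp [A.φ_bracket]

lemma map_I0 (α : Module.Dual K A.H) :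
    (A.I0 α).map A.φ.toLinearMap = A.I0 α := by
  apply le_antisymm
  · rw [Submodule.map_le_iff_le_comap]
    conv_lhs => rw [I0]
    refine iSup₂_le fun β hβ => ?_
    rw [← Submodule.map_le_iff_le_comap, A.map_bracketSpan]
    exact A.bracketSpan_le_I0 (A.twist_mem_cls hβ)
  · conv_lhs => rw [I0]
    refine iSup₂_le fun β hβ => ?_
    have h : A.bracketSpan β = (A.bracketSpan (β.comp A.φH.toLinearMap)).map A.φ.toLinearMap := by
      rw [A.map_bracketSpan, A.twist_comp]
    rw [h]
    exact Submodule.map_mono (A.bracketSpan_le_I0 (A.comp_mem_cls hβ))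

lemma map_Vcls (α : Module.Dual K A.H) :
    (A.Vcls α).map A.φ.toLinearMap = A.Vcls α := by
  apply le_antisymm
  · rw [Submodule.map_le_iff_le_comap]
    conv_lhs => rw [Vcls]
    refine iSup₂_le fun β hβ => ?_
    rw [← Submodule.map_le_iff_le_comap, A.map_rootSpace]
    exact A.rootSpace_le_Vcls (A.twist_mem_cls hβ)
  · conv_lhs => rw [Vcls]
    refine iSup₂_le fun β hβ => ?_
    have h : A.rootSpace β = (A.rootSpace (β.comp A.φH.toLinearMap)).map A.φ.toLinearMap := by
      rw [A.map_rootSpace, A.twist_comp]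
    rw [h]
    exact Submodule.map_mono (A.rootSpace_le_Vcls (A.comp_mem_cls hβ))

end SplitRegularHomLeibniz



open SplitRegularHomLeibniz in
theorem Icls_subalgebra {K L : Type*} [Field K] [AddCommGroup L] [Module K L]
    (A : SplitRegularHomLeibniz K L)
    (hsplit : A.IsSplit) (hmax : A.MaximalAbelian)
    (hsym : A.SymmetricRoots) (α : Module.Dual K A.H) (hα : α ∈ A.roots) :
    (∀ x ∈ A.Icls α, ∀ y ∈ A.Icls α, A.bracket x y ∈ A.Icls α) ∧
    (A.Icls α).map A.φ.toLinearMap = A.Icls α := by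
  constructor
  · intro x hx y hy
    obtain ⟨x0, hx0, xv, hxv, rfl⟩ := Submodule.mem_sup.1 hx
    obtain ⟨y0, hy0, yv, hyv, rfl⟩ := Submodule.mem_sup.1 hy
    have h1 : A.bracket x0 y0 ∈ A.Icls α :=
      A.I0_le_Icls α (A.bracket_I0_rootSpaceZero hx0 (A.I0_le_rootSpace_zero α hy0))
    have h2 : A.bracket x0 yv ∈ A.Icls α :=
      A.Vcls_le_Icls α (A.bracket_rootSpaceZero_Vcls (A.I0_le_rootSpace_zero α hx0) hyv)
    have h3 : A.bracket xv y0 ∈ A.Icls α :=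
      A.Vcls_le_Icls α (A.bracket_Vcls_rootSpaceZero hxv (A.I0_le_rootSpace_zero α hy0))
    have h4 : A.bracket xv yv ∈ A.Icls α := by
      have key : A.Vcls α ≤ Submodule.comap (A.bracket.flip yv) (A.Icls α) := by
        unfold SplitRegularHomLeibniz.Vcls
        refine iSup₂_le fun β hβ => fun z hz => ?_
        simp only [SetLike.mem_coe, Submodule.mem_comap, LinearMap.flip_apply]
        exact A.bracket_rootSpace_Vcls hsym hβ hz hyv
      simpa using key hxv
    have : A.bracket (x0 + xv) (y0 + yv)
        = A.bracket x0 y0 + A.bracket x0 yv + (A.bracket xv y0 + A.bracket xv yv) := by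
      simp [map_add]
      abel
    rw [this]
    exact add_mem (add_mem h1 h2) (add_mem h3 h4)
  · show (A.I0 α ⊔ A.Vcls α).map A.φ.toLinearMap = A.I0 α ⊔ A.Vcls α
    rw [Submodule.map_sup, A.map_I0, A.map_Vcls]
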